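/- arXiv:2205.00394 — 3 statements merged into one kernel-verified Lean document; each statement's English description precedes it below -/
import Mathlib

section
/- Let X ⊂ ℝⁿ be compact with 0 in its interior, and let f : X → ℝᵈ be continuous with f(0) = 0 and f continuously differentiable on a neighborhood of 0. Then for every ε > 0 there exists a continuously differentiable function g : ℝⁿ → ℝᵈ such that g(0) = 0, the derivative of g at 0 is the zero linear map, and sup_{x ∈ X} ‖f(x) − (Df(0))x − g(x)‖₁ < ε, where ‖·‖₁ denotes the ℓ¹ norm on ℝᵈ and Df(0) is the Jacobian of f at 0. -/
/-!
Subtract the linear part: `h := f - Df(0)` vanishes to first order at `0`. By Stone–Weierstrass,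
`h` is uniformly close on `X` to a polynomial map `p`. Gluing with a bump function `ψ` that equals
`1` near `0` and is supported where `f` is `C¹`, the map `g := p + ψ • (h - p)` is `C¹`, coincides
with `h` near `0` (so `g 0 = 0` and `Dg(0) = 0`), and `h - g = (1 - ψ) • (h - p)` is small on `X`.
-/

open Set Metric Filter Topology MvPolynomial
open scoped ContDiff

namespace MvPolynomial

variable {σ : Type*}

noncomputable def toContinuousMapOnAlgHom (K : Set (σ → ℝ)) : MvPolynomial σ ℝ →ₐ[ℝ] C(K, ℝ) :=
  aeval fun i => ⟨fun x => (x : σ → ℝ) i, (continuous_apply i).comp continuous_subtype_val⟩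

theorem toContinuousMapOnAlgHom_apply (K : Set (σ → ℝ)) (p : MvPolynomial σ ℝ) (x : K) :
    toContinuousMapOnAlgHom K p x = eval (x : σ → ℝ) p :=
  comp_aeval_apply _ (ContinuousMap.evalAlgHom ℝ ℝ x) p

theorem separatesPoints_range_toContinuousMapOnAlgHom (K : Set (σ → ℝ)) :
    (toContinuousMapOnAlgHom K).range.SeparatesPoints := by
  intro x y hxy
  obtain ⟨i, hi⟩ := Function.ne_iff.1 (Subtype.coe_injective.ne hxy)
  exact ⟨_, ⟨_, ⟨X i, rfl⟩, rfl⟩, by simpa [toContinuousMapOnAlgHom_apply] using hi⟩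

theorem exists_eval_near_of_continuousOn {K : Set (σ → ℝ)} (hK : IsCompact K) {u : (σ → ℝ) → ℝ}
    (hu : ContinuousOn u K) {ε : ℝ} (hε : 0 < ε) :
    ∃ p : MvPolynomial σ ℝ, ∀ x ∈ K, |eval x p - u x| < ε := by
  have := isCompact_iff_compactSpace.1 hK
  obtain ⟨⟨q, p, rfl⟩, hq⟩ :=
    ContinuousMap.exists_mem_subalgebra_near_continuous_of_separatesPoints _
      (separatesPoints_range_toContinuousMapOnAlgHom K) _
      (continuousOn_iff_continuous_domRestrict.1 hu) ε hε
  exact ⟨p, fun x hx => by simpa [toContinuousMapOnAlgHom_apply] using hq ⟨x, hx⟩⟩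

end MvPolynomial

theorem exists_contDiff_near_of_continuousOn {ι κ : Type*} [Fintype ι] [Fintype κ]
    {K : Set (ι → ℝ)} (hK : IsCompact K) {u : (ι → ℝ) → κ → ℝ} (hu : ContinuousOn u K)
    {ε : ℝ} (hε : 0 < ε) :
    ∃ p : (ι → ℝ) → κ → ℝ, ContDiff ℝ ω p ∧ ∀ x ∈ K, ‖p x - u x‖ < ε := by
  choose q hq using fun k =>
    exists_eval_near_of_continuousOn hK ((continuous_apply k).comp_continuousOn hu) hε
  refine ⟨fun x k => eval x (q k), contDiff_pi.2 fun k =>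
    (AnalyticOnNhd.eval_mvPolynomial (q k)).contDiff, fun x hx => ?_⟩
  exact (pi_norm_lt_iff hε).2 fun k => by simpa [Real.norm_eq_abs] using hq k x hx

theorem ContDiffOn.contDiff_smul_of_tsupport_subset {𝕜 E F : Type*} [NontriviallyNormedField 𝕜]
    [NormedAddCommGroup E] [NormedSpace 𝕜 E] [NormedAddCommGroup F] [NormedSpace 𝕜 F]
    {k : WithTop ℕ∞} {h : E → F} {U : Set E} (hh : ContDiffOn 𝕜 k h U) (hU : IsOpen U)
    {ψ : E → 𝕜} (hψ : ContDiff 𝕜 k ψ) (hψU : tsupport ψ ⊆ U) :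
    ContDiff 𝕜 k fun x => ψ x • h x := by
  refine contDiff_iff_contDiffAt.2 fun x => ?_
  by_cases hx : x ∈ U
  · exact hψ.contDiffAt.smul (hh.contDiffAt (hU.mem_nhds hx))
  · have hψx : ψ =ᶠ[𝓝 x] 0 := notMem_tsupport_iff_eventuallyEq.1 fun h => hx (hψU h)
    refine (contDiffAt_const (c := (0 : F))).congr_of_eventuallyEq ?_
    filter_upwards [hψx] with y hy
    simp [hy]

theorem Pi.sum_abs_lt_of_norm_lt {ι : Type*} [Fintype ι] {v : ι → ℝ} {ε : ℝ}
    (hv : ‖v‖ < ε / (Fintype.card ι + 1)) : ∑ i, |v i| < ε := by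
  have hε : 0 < ε := by
    have := (norm_nonneg v).trans_lt hv
    exact (div_pos_iff_of_pos_right (by positivity)).1 this
  calc ∑ i, |v i| = ∑ i, ‖v i‖ := by simp only [Real.norm_eq_abs]
    _ ≤ Fintype.card ι * ‖v‖ := by simpa using Pi.sum_norm_apply_le_norm v
    _ ≤ Fintype.card ι * (ε / (Fintype.card ι + 1)) := by gcongr
    _ < ε := by
      rw [mul_div_assoc', div_lt_iff₀ (by positivity)]
      linarith

theorem stmt_0_general {n d : ℕ} (X : Set (Fin n → ℝ)) (hX : IsCompact X)
    (f : (Fin n → ℝ) → (Fin d → ℝ))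
    (hf : ContinuousOn f X) (hf0 : f 0 = 0)
    (hf1 : ∃ U ∈ nhds (0 : Fin n → ℝ), ContDiffOn ℝ 1 f U)
    (ε : ℝ) (hε : 0 < ε) :
    ∃ g : (Fin n → ℝ) → (Fin d → ℝ), ContDiff ℝ 1 g ∧ g 0 = 0 ∧
      fderiv ℝ g 0 = 0 ∧
      ∀ x ∈ X, ∑ i, |f x i - fderiv ℝ f 0 x i - g x i| < ε := by
  obtain ⟨U, hU, hfU⟩ := hf1
  set A := fderiv ℝ f 0
  obtain ⟨r, hr, hrU⟩ : ∃ r > 0, closedBall (0 : Fin n → ℝ) r ⊆ interior U :=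
    nhds_basis_closedBall.mem_iff.1 (interior_mem_nhds.2 hU)
  let ψ : ContDiffBump (0 : Fin n → ℝ) := ⟨r / 2, r, half_pos hr, half_lt_self hr⟩
  obtain ⟨p, hp, hpX⟩ := exists_contDiff_near_of_continuousOn hX
    (hf.sub A.continuous.continuousOn) (ε := ε / (Fintype.card (Fin d) + 1)) (by positivity)
  let g := fun x => p x + ψ x • (f x - A x - p x)
  have hg_near : g =ᶠ[𝓝 0] fun x => f x - A x := by
    filter_upwards [ψ.eventuallyEq_one] with x hx
    simp [g, hx]
  refine ⟨g, ?_, ?_, ?_, fun x hx => Pi.sum_abs_lt_of_norm_lt ?_⟩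
  · have hfAp : ContDiffOn ℝ 1 (fun x => f x - A x - p x) (interior U) :=
      ((hfU.mono interior_subset).sub A.contDiff.contDiffOn).sub (hp.of_le le_top).contDiffOn
    exact (hp.of_le le_top).add <|
      hfAp.contDiff_smul_of_tsupport_subset isOpen_interior ψ.contDiff (ψ.tsupport_eq ▸ hrU)
  · simp [hg_near.eq_of_nhds, hf0]
  · have hdf : DifferentiableAt ℝ f 0 := (hfU.contDiffAt hU).differentiableAt one_ne_zero
    rw [hg_near.fderiv_eq, fderiv_fun_sub hdf A.differentiableAt, A.fderiv, sub_self]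
  · have hψx : ‖1 - ψ x‖ ≤ 1 := by
      rw [Real.norm_eq_abs, abs_le]
      constructor <;> linarith [ψ.nonneg (x := x), ψ.le_one (x := x)]
    calc ‖f x - A x - g x‖ = ‖(1 - ψ x) • (f x - A x - p x)‖ := by
          congr 1; simp only [g, sub_smul, one_smul]; abel
      _ ≤ ‖f x - A x - p x‖ := by
          rw [norm_smul]; exact mul_le_of_le_one_left (norm_nonneg _) hψx
      _ < ε / (Fintype.card (Fin d) + 1) := by rw [← norm_neg]; simpa using hpX x hx

/-- Corollary 1 (approximation of locally C¹ functions). -/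
theorem stmt_0 {n d : ℕ} (X : Set (Fin n → ℝ)) (hX : IsCompact X)
    (h0 : (0 : Fin n → ℝ) ∈ interior X)
    (f : (Fin n → ℝ) → (Fin d → ℝ))
    (hf : ContinuousOn f X) (hf0 : f 0 = 0)
    (hf1 : ∃ U ∈ nhds (0 : Fin n → ℝ), ContDiffOn ℝ 1 f U)
    (ε : ℝ) (hε : 0 < ε) :
    ∃ g : (Fin n → ℝ) → (Fin d → ℝ), ContDiff ℝ 1 g ∧ g 0 = 0 ∧
      fderiv ℝ g 0 = 0 ∧
      ∀ x ∈ X, ∑ i, |f x i - fderiv ℝ f 0 x i - g x i| < ε :=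
  stmt_0_general X hX f hf hf0 hf1 ε hε
end

section
/- Let X ⊂ ℝⁿ be compact, convex (or star-shaped with respect to 0), with 0 in its interior, and let f : X → ℝᵈ be continuous with f(0) = 0 and f continuously differentiable on a neighborhood of 0. Let S be a family of continuous matrix-valued functions N : ℝⁿ → ℝ^{d×n} with the universal approximation property: for every continuous h : X → ℝ^{d×n} and every δ > 0 there exists N ∈ S with sup_{x ∈ X} ‖h(x) − N(x)‖₁,₁ < δ, where ‖A‖₁,₁ denotes the sum of absolute values of the entries of A. Then for every ε > 0 there exists N ∈ S such that for all x ∈ X, ‖f(x) − [Df(0) + N(x) − N(0)]x‖₁ < ε. -/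
/-!
Put `g := f - Df(0)`, continuous on `X` with `g 0 = 0`. The matrix field
`H x = g(x) xᵀ / max (x ⬝ᵥ x, r)` is continuous, vanishes at `0`, and satisfies `H(x) x = c(x) g(x)`
with `c ∈ [0, 1]` and `c = 1` off the ball `x ⬝ᵥ x < r`; choosing `r` so small that `g` is small on
that ball makes `H(x) x` uniformly close to `g(x)`. Replacing `H` by an `N ∈ S` that is `δ`-close in
`‖·‖₁,₁` then costs at most `δ · sup_X ‖x‖` at `x` and again at `0`, whence the `N(x) - N(0)`.
-/

open Matrix Finset

section

variable {m n : Type*} [Fintype n]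

lemma Matrix.sum_abs_mulVec_le [Fintype m] (A : Matrix m n ℝ) (v : n → ℝ) :
    ∑ i, |(A *ᵥ v) i| ≤ (∑ i, ∑ j, |A i j|) * ‖v‖ := by
  rw [sum_mul]
  refine sum_le_sum fun i _ => ?_
  calc |(A *ᵥ v) i| = |∑ j, A i j * v j| := rfl
    _ ≤ ∑ j, |A i j| * |v j| := by
      simpa only [abs_mul] using abs_sum_le_sum_abs (fun j => A i j * v j) univ
    _ ≤ ∑ j, |A i j| * ‖v‖ := by
      gcongr with j
      exact norm_le_pi_norm v j
    _ = (∑ j, |A i j|) * ‖v‖ := (sum_mul ..).symm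

lemma sq_norm_le_dotProduct_self (x : n → ℝ) : ‖x‖ ^ 2 ≤ x ⬝ᵥ x := by
  have hx : 0 ≤ x ⬝ᵥ x := sum_nonneg fun i _ => mul_self_nonneg (x i)
  rw [← Real.le_sqrt (norm_nonneg x) hx]
  refine (pi_norm_le_iff_of_nonneg (Real.sqrt_nonneg _)).2 fun i => Real.abs_le_sqrt ?_
  rw [sq]
  exact single_le_sum (f := fun j => x j * x j) (fun j _ => mul_self_nonneg (x j)) (mem_univ i)

noncomputable def radialFactor (r : ℝ) (g : (n → ℝ) → m → ℝ) (x : n → ℝ) : Matrix m n ℝ :=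
  vecMulVec (g x) ((max (x ⬝ᵥ x) r)⁻¹ • x)

variable {r : ℝ} {g : (n → ℝ) → m → ℝ}

lemma radialFactor_mulVec_self (x : n → ℝ) :
    radialFactor r g x *ᵥ x = (x ⬝ᵥ x / max (x ⬝ᵥ x) r) • g x := by
  rw [radialFactor, vecMulVec_mulVec, smul_dotProduct, smul_eq_mul, div_eq_inv_mul]
  exact op_smul_eq_smul _ _

@[simp]
lemma radialFactor_zero : radialFactor r g 0 = 0 := by
  ext
  simp [radialFactor, vecMulVec_apply]

lemma ContinuousOn.radialFactor {X : Set (n → ℝ)} (hg : ContinuousOn g X) (hr : 0 < r) :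
    ContinuousOn (radialFactor r g) X := by
  have hscale : Continuous fun x : n → ℝ => (max (x ⬝ᵥ x) r)⁻¹ • x :=
    ((continuous_id.dotProduct continuous_id).max continuous_const).inv₀
      (fun x => (hr.trans_le (le_max_right _ _)).ne') |>.smul continuous_id
  exact (continuous_fst.matrix_vecMulVec continuous_snd).comp_continuousOn
    (hg.prodMk hscale.continuousOn)

lemma radialFactor_mulVec_self_of_le {x : n → ℝ} (hx : r ≤ x ⬝ᵥ x) (hr : 0 < r) :
    radialFactor r g x *ᵥ x = g x := by
  rw [radialFactor_mulVec_self, max_eq_left hx, div_self (hr.trans_le hx).ne', one_smul]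

lemma sum_abs_sub_radialFactor_mulVec_le [Fintype m] (hr : 0 < r) (x : n → ℝ) :
    ∑ i, |g x i - (radialFactor r g x *ᵥ x) i| ≤ ∑ i, |g x i| := by
  set c := x ⬝ᵥ x / max (x ⬝ᵥ x) r
  have hmax : 0 ≤ max (x ⬝ᵥ x) r := hr.le.trans (le_max_right _ _)
  have hc : |1 - c| ≤ 1 := by
    have hc0 : 0 ≤ c := div_nonneg (sum_nonneg fun i _ => mul_self_nonneg (x i)) hmax
    have hc1 : c ≤ 1 := div_le_one_of_le₀ (le_max_left _ _) hmax
    rw [abs_le]; constructor <;> linarith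
  refine sum_le_sum fun i _ => ?_
  rw [radialFactor_mulVec_self, Pi.smul_apply, smul_eq_mul, ← one_sub_mul, abs_mul]
  exact mul_le_of_le_one_left (abs_nonneg _) hc

lemma exists_pos_forall_dotProduct_self_lt [Fintype m] {X : Set (n → ℝ)} (hX0 : 0 ∈ X)
    (hg : ContinuousOn g X) (hg0 : g 0 = 0) {ε : ℝ} (hε : 0 < ε) :
    ∃ r > 0, ∀ x ∈ X, x ⬝ᵥ x < r → ∑ i, |g x i| < ε := by
  have hcont : ContinuousWithinAt (fun x => ∑ i, |g x i|) X 0 :=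
    (continuousOn_finsetSum _ fun i _ => ((continuous_apply i).comp_continuousOn hg).abs) 0 hX0
  obtain ⟨δ, hδ, hball⟩ := Metric.continuousWithinAt_iff.1 hcont ε hε
  refine ⟨δ ^ 2, by positivity, fun x hx hxr => ?_⟩
  have hxδ : ‖x‖ < δ :=
    lt_of_pow_lt_pow_left₀ 2 hδ.le ((sq_norm_le_dotProduct_self x).trans_lt hxr)
  have := hball hx (by rwa [dist_zero_right])
  simp only [hg0, Pi.zero_apply, abs_zero, sum_const_zero, dist_zero_right, Real.norm_eq_abs] at this
  exact (le_abs_self _).trans_lt this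

theorem exists_continuousOn_mulVec_self_approx [Fintype m] {X : Set (n → ℝ)} (hX0 : 0 ∈ X)
    (hg : ContinuousOn g X) (hg0 : g 0 = 0) {ε : ℝ} (hε : 0 < ε) :
    ∃ H : (n → ℝ) → Matrix m n ℝ, ContinuousOn H X ∧ H 0 = 0 ∧
      ∀ x ∈ X, ∑ i, |g x i - (H x *ᵥ x) i| < ε := by
  obtain ⟨r, hr, hsmall⟩ := exists_pos_forall_dotProduct_self_lt hX0 hg hg0 hε
  refine ⟨radialFactor r g, hg.radialFactor hr, radialFactor_zero, fun x hx => ?_⟩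
  rcases lt_or_ge (x ⬝ᵥ x) r with hxr | hxr
  · exact (sum_abs_sub_radialFactor_mulVec_le hr x).trans_lt (hsmall x hx hxr)
  · simpa [radialFactor_mulVec_self_of_le hxr hr] using hε

theorem exists_mem_forall_sum_abs_sub_mulVec_lt [Fintype m] {X : Set (n → ℝ)}
    (hX : Bornology.IsBounded X) (hX0 : 0 ∈ X) (hg : ContinuousOn g X) (hg0 : g 0 = 0)
    (S : Set ((n → ℝ) → Matrix m n ℝ))
    (hUA : ∀ h : (n → ℝ) → Matrix m n ℝ, ContinuousOn h X →
      ∀ δ > 0, ∃ N ∈ S, ∀ x ∈ X, ∑ i, ∑ j, |h x i j - N x i j| < δ)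
    {ε : ℝ} (hε : 0 < ε) :
    ∃ N ∈ S, ∀ x ∈ X, ∑ i, |g x i - ((N x - N 0) *ᵥ x) i| < ε := by
  obtain ⟨R, hR, hXR⟩ := hX.exists_pos_norm_le
  obtain ⟨H, hHc, hH0, hH⟩ :=
    exists_continuousOn_mulVec_self_approx (m := m) hX0 hg hg0 (by positivity : 0 < ε / 3)
  obtain ⟨N, hNS, hN⟩ := hUA H hHc (ε / 3 / R) (by positivity)
  have happrox : ∀ y ∈ X, ∀ x ∈ X, ∑ i, |((H y - N y) *ᵥ x) i| < ε / 3 := fun y hy x hx =>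
    calc _ ≤ (∑ i, ∑ j, |(H y - N y) i j|) * ‖x‖ := sum_abs_mulVec_le _ _
      _ ≤ (∑ i, ∑ j, |(H y - N y) i j|) * R := by gcongr; exact hXR x hx
      _ < ε / 3 / R * R := by gcongr; exact hN y hy
      _ = ε / 3 := div_mul_cancel₀ _ hR.ne'
  refine ⟨N, hNS, fun x hx => ?_⟩
  have hsplit : ∀ i, g x i - ((N x - N 0) *ᵥ x) i =
      (g x i - (H x *ᵥ x) i) + ((H x - N x) *ᵥ x) i - ((H 0 - N 0) *ᵥ x) i := fun i => by
    simp only [hH0, sub_mulVec, zero_sub, neg_mulVec, Pi.sub_apply, Pi.neg_apply]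
    ring
  calc ∑ i, |g x i - ((N x - N 0) *ᵥ x) i|
      ≤ ∑ i, (|g x i - (H x *ᵥ x) i| + |((H x - N x) *ᵥ x) i| + |((H 0 - N 0) *ᵥ x) i|) :=
        sum_le_sum fun i _ => hsplit i ▸ (abs_sub _ _).trans (by gcongr; exact abs_add_le _ _)
    _ = ∑ i, |g x i - (H x *ᵥ x) i| + ∑ i, |((H x - N x) *ᵥ x) i|
          + ∑ i, |((H 0 - N 0) *ᵥ x) i| := by simp only [sum_add_distrib]
    _ < ε / 3 + ε / 3 + ε / 3 := by
        gcongr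
        exacts [hH x hx, happrox x hx x hx, happrox 0 hX0 x hx]
    _ = ε := by ring

end

theorem stmt_3_general {n d : ℕ} (X : Set (Fin n → ℝ)) (hX : IsCompact X)
    (h0 : (0 : Fin n → ℝ) ∈ interior X)
    (f : (Fin n → ℝ) → (Fin d → ℝ))
    (hf : ContinuousOn f X) (hf0 : f 0 = 0)
    (S : Set ((Fin n → ℝ) → Matrix (Fin d) (Fin n) ℝ))
    (hUA : ∀ h : (Fin n → ℝ) → Matrix (Fin d) (Fin n) ℝ, ContinuousOn h X →
      ∀ δ > 0, ∃ N ∈ S, ∀ x ∈ X, ∑ i, ∑ j, |h x i j - N x i j| < δ)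
    (ε : ℝ) (hε : 0 < ε) :
    ∃ N ∈ S, ∀ x ∈ X,
      ∑ i, |f x i - (fderiv ℝ f 0 x i + ((N x - N 0).mulVec x) i)| < ε := by
  obtain ⟨N, hNS, hN⟩ := exists_mem_forall_sum_abs_sub_mulVec_lt hX.isBounded
    (interior_subset h0) (hf.sub (fderiv ℝ f 0).continuous.continuousOn) (by simp [hf0]) S hUA hε
  refine ⟨N, hNS, fun x hx => ?_⟩
  simpa only [Pi.sub_apply, sub_sub] using hN x hx

/-- Theorem 2 (approximation capacity of the "matrix" QRnet architecture). -/
theorem stmt_3 {n d : ℕ} (X : Set (Fin n → ℝ)) (hX : IsCompact X)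
    (hstar : ∀ x ∈ X, ∀ s : ℝ, s ∈ Set.Icc (0 : ℝ) 1 → s • x ∈ X)
    (h0 : (0 : Fin n → ℝ) ∈ interior X)
    (f : (Fin n → ℝ) → (Fin d → ℝ))
    (hf : ContinuousOn f X) (hf0 : f 0 = 0)
    (hf1 : ∃ U ∈ nhds (0 : Fin n → ℝ), ContDiffOn ℝ 1 f U)
    (S : Set ((Fin n → ℝ) → Matrix (Fin d) (Fin n) ℝ))
    (hS : ∀ N ∈ S, Continuous N)
    (hUA : ∀ h : (Fin n → ℝ) → Matrix (Fin d) (Fin n) ℝ, ContinuousOn h X →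
      ∀ δ > 0, ∃ N ∈ S, ∀ x ∈ X, ∑ i, ∑ j, |h x i j - N x i j| < δ)
    (ε : ℝ) (hε : 0 < ε) :
    ∃ N ∈ S, ∀ x ∈ X,
      ∑ i, |f x i - (fderiv ℝ f 0 x i + ((N x - N 0).mulVec x) i)| < ε :=
  stmt_3_general X hX h0 f hf hf0 S hUA ε hε
end

section
/- Let x_f ∈ ℝⁿ, u_f ∈ ℝᵐ, and let K be an m×n real matrix. Let σ : ℝᵐ → ℝᵐ be continuously differentiable with σ(u_f) = u_f and Fréchet derivative at u_f equal to the identity map. Let s : ℝᵐ → ℝᵐ be any function that equals the identity on some neighborhood of u_f. Let N : ℝⁿ → ℝᵐ be continuously differentiable with Jacobian DN. Define û : ℝⁿ → ℝᵐ by û(x) = σ( s(u_f − K(x − x_f)) − [DN(x_f)](x − x_f) + N(x) − N(x_f) ). Then û(x_f) = u_f and the Fréchet derivative of û at x_f is the linear map x ↦ −K·x. -/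
/-!
Near `x_f` the LQR term stays in the neighbourhood of `u_f` where `s` is the identity, so
the saturation `s` can be dropped without changing the germ of `û` at `x_f`. The Jacobian
correction `N x - N x_f - DN(x_f)(x - x_f)` vanishes to first order at `x_f`, so the argument
of `σ` has the LQR derivative `-K`, and `σ` contributes the factor `Dσ(u_f) = I`.
-/

open Topology

section

variable {𝕜 : Type*} [NontriviallyNormedField 𝕜]
  {E : Type*} [NormedAddCommGroup E] [NormedSpace 𝕜 E]
  {F : Type*} [NormedAddCommGroup F] [NormedSpace 𝕜 F]

theorem ContinuousLinearMap.hasFDerivAt_const_sub_apply_sub (A : E →L[𝕜] F) (u : F)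
    (x₀ : E) : HasFDerivAt (fun x => u - A (x - x₀)) (-A) x₀ := by
  have hA : HasFDerivAt (fun x => A (x - x₀)) A x₀ :=
    (hasFDerivAt_comp_sub (f := A) x₀).mpr A.hasFDerivAt
  simpa only [zero_sub] using (hasFDerivAt_const u x₀).fun_sub hA

theorem HasFDerivAt.sub_apply_sub_add_sub {g N : E → F} {L D : E →L[𝕜] F} {x₀ : E}
    (hg : HasFDerivAt g L x₀) (hN : HasFDerivAt N D x₀) :
    HasFDerivAt (fun x => g x - D (x - x₀) + N x - N x₀) L x₀ := by
  have hD : HasFDerivAt (fun x => D (x - x₀)) D x₀ :=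
    (hasFDerivAt_comp_sub (f := D) x₀).mpr D.hasFDerivAt
  simpa only [sub_add_cancel] using ((hg.fun_sub hD).fun_add hN).sub_const (N x₀)

end

/-- u_Jac-QRnet (18) equals u_f at x_f and its Fréchet derivative there is x ↦ −K·x. -/
theorem stmt_12 {n m : ℕ} (x_f : Fin n → ℝ) (u_f : Fin m → ℝ)
    (K : Matrix (Fin m) (Fin n) ℝ)
    (σ : (Fin m → ℝ) → (Fin m → ℝ)) (hσ : ContDiff ℝ 1 σ)
    (hσf : σ u_f = u_f)
    (hσd : fderiv ℝ σ u_f = ContinuousLinearMap.id ℝ (Fin m → ℝ))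
    (s : (Fin m → ℝ) → (Fin m → ℝ))
    (hs : ∀ᶠ u in nhds u_f, s u = u)
    (N : (Fin n → ℝ) → (Fin m → ℝ)) (hN : ContDiff ℝ 1 N)
    (u_hat : (Fin n → ℝ) → (Fin m → ℝ))
    (hu : ∀ x, u_hat x = σ (s (u_f - K.mulVec (x - x_f))
      - fderiv ℝ N x_f (x - x_f) + N x - N x_f)) :
    u_hat x_f = u_f ∧
      HasFDerivAt u_hat
        (-(LinearMap.toContinuousLinearMap (Matrix.mulVecLin K))) x_f := by
  set lqr : (Fin n → ℝ) → (Fin m → ℝ) := fun x => u_f - K.mulVec (x - x_f)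
  have hlqr : HasFDerivAt lqr (-(LinearMap.toContinuousLinearMap (Matrix.mulVecLin K))) x_f :=
    (LinearMap.toContinuousLinearMap K.mulVecLin).hasFDerivAt_const_sub_apply_sub u_f x_f
  have hlqr_f : lqr x_f = u_f := by simp [lqr]
  have hsat : ∀ᶠ x in 𝓝 x_f, s (lqr x) = lqr x :=
    hlqr.continuousAt.eventually (hlqr_f ▸ hs)
  have hσ_id : HasFDerivAt σ (ContinuousLinearMap.id ℝ _) u_f :=
    hσd ▸ (hσ.differentiable one_ne_zero u_f).hasFDerivAt
  have harg : HasFDerivAt (fun x => lqr x - fderiv ℝ N x_f (x - x_f) + N x - N x_f)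
      (-(LinearMap.toContinuousLinearMap (Matrix.mulVecLin K))) x_f :=
    hlqr.sub_apply_sub_add_sub (hN.differentiable one_ne_zero x_f).hasFDerivAt
  refine ⟨by simp [hu, hs.self_of_nhds, hσf], ?_⟩
  have harg_f : lqr x_f - fderiv ℝ N x_f (x_f - x_f) + N x_f - N x_f = u_f := by
    simp [hlqr_f]
  refine (HasFDerivAt.comp x_f (by rwa [harg_f]) harg).congr_of_eventuallyEq ?_
  filter_upwards [hsat] with x hx
  rw [hu]
  exact congrArg (fun v => σ (v - fderiv ℝ N x_f (x - x_f) + N x - N x_f)) hx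
end
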